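/- Let J be a positive integer that is not of the form 3^k · ∏ p_i^{l_i} · ∏ q_j^{2m_j}, where p_i ≡ 1 (mod 3) and q_j ≡ −1 (mod 3) are primes, and suppose J is prime. Then there do not exist positive integers k, m, n with gcd(m, n) = 1, n ≤ m ≤ 2n, 3 ∤ (m + n), (m, n) ≠ (1, 1), and J = k(2m − n)n. Consequently, Λ_h has no well-rounded sublattice of index J. -/
import Mathlib


/-- `J` has the form `3^k · ∏ p_i^{l_i} · ∏ q_j^{2 m_j}` with `p_i ≡ 1 (mod 3)`
and `q_j ≡ -1 (mod 3)` primes: every prime factor is `3`, is `≡ 1 (mod 3)`,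
or occurs to an even power. -/
def IsIdealIndexForm (J : ℕ) : Prop :=
  ∀ p : ℕ, p.Prime → p ∣ J → p = 3 ∨ p % 3 = 1 ∨ Even (J.factorization p)

theorem stmt_14 (J : ℕ) (hJpos : 0 < J) (hform : ¬ IsIdealIndexForm J)
    (hJprime : J.Prime) :
    ¬ ∃ k m n : ℕ, 0 < k ∧ 0 < m ∧ 0 < n ∧ Nat.gcd m n = 1 ∧
        n ≤ m ∧ m ≤ 2 * n ∧ ¬ 3 ∣ (m + n) ∧ (m, n) ≠ (1, 1) ∧
        J = k * (2 * m - n) * n := by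
  rintro ⟨k, m, n, hk, hm, hn, hg, hnm, hm2n, h3, hne, hJ⟩
  have hnd : n ∣ J := ⟨k * (2 * m - n), by rw [hJ]; ring⟩
  have hne' : ¬ (m = 1 ∧ n = 1) := by
    intro ⟨h1, h2⟩; exact hne (by simp [h1, h2])
  rcases (hJprime.eq_one_or_self_of_dvd n hnd) with h1 | h1
  · -- n = 1, so m = 1 (excluded) or m = 2 (then 3 ∣ m + n)
    subst h1
    interval_cases m
    · exact hne' ⟨rfl, rfl⟩
    · exact h3 ⟨1, rfl⟩
  · -- n = J
    subst h1
    have h2 : 2 ≤ n := hJprime.two_le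
    have h0 : k * (2 * m - n) * n = 1 * n := by omega
    have h5 : k * (2 * m - n) = 1 := Nat.eq_of_mul_eq_mul_right hn h0
    have h4 : 2 * m - n = 1 := Nat.eq_one_of_mul_eq_one_left h5
    omega
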